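/- arXiv:1710.04739 — 4 statements merged into one kernel-verified Lean document; each statement's English description precedes it below -/
import Mathlib

section
/- Let σ = (s_{i,j}) be an n×n shift matrix. The k-subspace g_σ := {A ∈ gl_n(k[t]) : t^{s_{i,j}} divides the (i,j)-entry of A for all 1 ≤ i,j ≤ n} is a Lie subalgebra of gl_n(k[t]), and it is generated as a Lie algebra by the set {e_{i,i}t^r : 1 ≤ i ≤ n, r ≥ 0} ∪ {e_{i,i+1}t^r : 1 ≤ i < n, r ≥ s_{i,i+1}} ∪ {e_{i+1,i}t^r : 1 ≤ i < n, r ≥ s_{i+1,i}}. -/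
/-!
Additivity of `σ` along monotone paths `i ≤ l ≤ j` implies the triangle inequality
`s i j ≤ s i l + s l j` for all `i, l, j`, and this is exactly what makes the divisibility
conditions `t^{s_{i,j}} ∣ A_{i,j}` stable under matrix products, hence under brackets.
Conversely, `g_σ` is spanned over `k` by the `e_{i,j} t^r` with `r ≥ s_{i,j}`; for `i < j` such an
element is the bracket `[e_{i,i+1} t^{s_{i,i+1}}, e_{i+1,j} t^{r - s_{i,i+1}}]`, and
`s_{i,i+1} + s_{i+1,j} = s_{i,j}` lets an induction on `j - i` go through (symmetrically for
`i > j`).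
-/

namespace CurrentAlgebraPaper

attribute [local instance 100] LieRing.ofAssociativeRing

/-- The element `e_{i,j} t^r` of the current algebra `gl_n(k[t])`. -/
noncomputable def E (k : Type) [Field k] (n : ℕ) (i j : Fin n) (r : ℕ) :
    Matrix (Fin n) (Fin n) (Polynomial k) :=
  Matrix.single i j (Polynomial.X ^ r)

open Polynomial

def IsShiftMatrix {n : ℕ} (s : Fin n → Fin n → ℕ) : Prop :=
  ∀ i j l : Fin n, |(i : ℤ) - (j : ℤ)| + |(j : ℤ) - (l : ℤ)| = |(i : ℤ) - (l : ℤ)| →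
    s i j + s j l = s i l

namespace IsShiftMatrix

variable {n : ℕ} {s : Fin n → Fin n → ℕ}

theorem add_of_between (hσ : IsShiftMatrix s) {i j l : Fin n}
    (h : (i : ℕ) ≤ j ∧ (j : ℕ) ≤ l ∨ (l : ℕ) ≤ j ∧ (j : ℕ) ≤ i) :
    s i j + s j l = s i l := by
  refine hσ i j l ?_
  rcases h with ⟨hij, hjl⟩ | ⟨hlj, hji⟩
  · rw [abs_of_nonpos (by omega), abs_of_nonpos (by omega), abs_of_nonpos (by omega)]
    ring
  · rw [abs_of_nonneg (by omega), abs_of_nonneg (by omega), abs_of_nonneg (by omega)]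
    ring

theorem diag_eq_zero (hσ : IsShiftMatrix s) (i : Fin n) : s i i = 0 := by
  have := hσ.add_of_between (i := i) (j := i) (l := i) (.inl ⟨le_rfl, le_rfl⟩)
  omega

/-- Whichever of `i`, `l`, `j` lies between the other two, additivity along that path gives
the bound. -/
theorem le_add (hσ : IsShiftMatrix s) (i l j : Fin n) : s i j ≤ s i l + s l j := by
  have hl := fun h => hσ.add_of_between (i := i) (j := l) (l := j) h
  have hi := fun h => hσ.add_of_between (i := l) (j := i) (l := j) h
  have hj := fun h => hσ.add_of_between (i := i) (j := j) (l := l) h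
  omega

end IsShiftMatrix

section ShiftedLieSubalgebra

variable {R : Type*} [CommRing R] {ι : Type*} [Fintype ι]

theorem pow_dvd_mul_apply {x : R} {s : ι → ι → ℕ} (hs : ∀ i l j, s i j ≤ s i l + s l j)
    {A B : Matrix ι ι R} (hA : ∀ i j, x ^ s i j ∣ A i j) (hB : ∀ i j, x ^ s i j ∣ B i j)
    (i j : ι) : x ^ s i j ∣ (A * B) i j := by
  rw [Matrix.mul_apply]
  refine Finset.dvd_sum fun l _ => ?_
  calc x ^ s i j ∣ x ^ (s i l + s l j) := pow_dvd_pow _ (hs i l j)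
    _ = x ^ s i l * x ^ s l j := pow_add _ _ _
    _ ∣ A i l * B l j := mul_dvd_mul (hA i l) (hB l j)

def shiftedLieSubalgebra (K : Type*) [CommRing K] [Algebra K R] [DecidableEq ι] (x : R)
    (s : ι → ι → ℕ) (hs : ∀ i l j, s i j ≤ s i l + s l j) :
    LieSubalgebra K (Matrix ι ι R) where
  carrier := {A | ∀ i j, x ^ s i j ∣ A i j}
  add_mem' hA hB i j := dvd_add (hA i j) (hB i j)
  zero_mem' _ _ := dvd_zero _
  smul_mem' c _ hA i j := by
    rw [Matrix.smul_apply, Algebra.smul_def]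
    exact (hA i j).mul_left _
  lie_mem' hA hB i j := by
    rw [Ring.lie_def, Matrix.sub_apply]
    exact dvd_sub (pow_dvd_mul_apply hs hA hB i j) (pow_dvd_mul_apply hs hB hA i j)

theorem single_mem_shiftedLieSubalgebra (K : Type*) [CommRing K] [Algebra K R] [DecidableEq ι]
    {x : R} {s : ι → ι → ℕ} (hs : ∀ i l j, s i j ≤ s i l + s l j) {i j : ι} {r : ℕ}
    (hr : s i j ≤ r) : Matrix.single i j (x ^ r) ∈ shiftedLieSubalgebra K x s hs := by
  intro a b
  rw [Matrix.single_apply]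
  split_ifs with h
  · obtain ⟨rfl, rfl⟩ := h
    exact pow_dvd_pow _ hr
  · exact dvd_zero _

end ShiftedLieSubalgebra

theorem single_mem_of_X_pow_dvd {K : Type*} [CommRing K] {ι : Type*} [DecidableEq ι]
    (S : Submodule K (Matrix ι ι K[X])) {i j : ι} {m : ℕ}
    (hS : ∀ r, m ≤ r → Matrix.single i j (X ^ r) ∈ S) {p : K[X]} (hp : X ^ m ∣ p) :
    Matrix.single i j p ∈ S := by
  obtain ⟨q, rfl⟩ := hp
  induction q using Polynomial.induction_on' with
  | add p q hp hq => rw [mul_add, Matrix.single_add]; exact S.add_mem hp hq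
  | monomial r c =>
    rw [X_pow_mul_monomial, ← C_mul_X_pow_eq_monomial, ← smul_eq_C_mul, ← Matrix.smul_single]
    exact S.smul_mem c (hS _ (Nat.le_add_left _ _))

section Generators

variable (k : Type) [Field k] {n : ℕ}

theorem lie_E_E (i j l : Fin n) (a b : ℕ) (hil : i ≠ l) :
    ⁅E k n i j a, E k n j l b⁆ = E k n i l (a + b) := by
  rw [Ring.lie_def, E, E, E, Matrix.single_mul_single_same,
    Matrix.single_mul_single_of_ne (c := X ^ b) j l i hil.symm, sub_zero, pow_add]

variable (n) in
def shiftedGenerators (s : Fin n → Fin n → ℕ) : Set (Matrix (Fin n) (Fin n) k[X]) :=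
  {A | ∃ (i : Fin n) (r : ℕ), A = E k n i i r} ∪
  {A | ∃ (i j : Fin n) (r : ℕ), (j : ℕ) = (i : ℕ) + 1 ∧ s i j ≤ r ∧ A = E k n i j r} ∪
  {A | ∃ (i j : Fin n) (r : ℕ), (i : ℕ) = (j : ℕ) + 1 ∧ s i j ≤ r ∧ A = E k n i j r}

variable {s : Fin n → Fin n → ℕ}

local notation "𝔤" =>
  LieSubalgebra.lieSpan k (Matrix (Fin n) (Fin n) k[X]) (shiftedGenerators k n s)

theorem E_mem_lieSpan_of_le (hσ : IsShiftMatrix s) (d : ℕ) :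
    ∀ i j : Fin n, (j : ℕ) = i + d → ∀ r, s i j ≤ r → E k n i j r ∈ 𝔤 := by
  induction d with
  | zero =>
    intro i j hij r _
    obtain rfl : i = j := Fin.ext hij.symm
    exact LieSubalgebra.subset_lieSpan (.inl (.inl ⟨i, r, rfl⟩))
  | succ d ih =>
    intro i j hij r hr
    obtain ⟨m, hm⟩ : ∃ m : Fin n, (m : ℕ) = i + 1 := ⟨⟨i + 1, by omega⟩, rfl⟩
    have hs : s i m + s m j = s i j := hσ.add_of_between (.inl ⟨by omega, by omega⟩)
    have hE := lie_E_E k i m j (s i m) (r - s i m) (Fin.ne_of_val_ne (by omega))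
    rw [Nat.add_sub_cancel' (by omega)] at hE
    rw [← hE]
    exact (𝔤).lie_mem (LieSubalgebra.subset_lieSpan (.inl (.inr ⟨i, m, _, hm, le_rfl, rfl⟩)))
      (ih m j (by omega) _ (by omega))

theorem E_mem_lieSpan_of_ge (hσ : IsShiftMatrix s) (d : ℕ) :
    ∀ i j : Fin n, (i : ℕ) = j + d → ∀ r, s i j ≤ r → E k n i j r ∈ 𝔤 := by
  induction d with
  | zero =>
    intro i j hij r _
    obtain rfl : i = j := Fin.ext hij
    exact LieSubalgebra.subset_lieSpan (.inl (.inl ⟨i, r, rfl⟩))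
  | succ d ih =>
    intro i j hij r hr
    obtain ⟨m, hm⟩ : ∃ m : Fin n, (m : ℕ) = j + 1 := ⟨⟨j + 1, by omega⟩, rfl⟩
    have hs : s i m + s m j = s i j := hσ.add_of_between (.inr ⟨by omega, by omega⟩)
    have hE := lie_E_E k i m j (r - s m j) (s m j) (Fin.ne_of_val_ne (by omega))
    rw [Nat.sub_add_cancel (by omega)] at hE
    rw [← hE]
    exact (𝔤).lie_mem (ih i m (by omega) _ (by omega))
      (LieSubalgebra.subset_lieSpan (.inr ⟨m, j, _, hm, le_rfl, rfl⟩))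

theorem E_mem_lieSpan (hσ : IsShiftMatrix s) {i j : Fin n} {r : ℕ} (hr : s i j ≤ r) :
    E k n i j r ∈ 𝔤 := by
  rcases le_total (i : ℕ) j with h | h
  · exact E_mem_lieSpan_of_le k hσ (j - i) i j (by omega) r hr
  · exact E_mem_lieSpan_of_ge k hσ (i - j) i j (by omega) r hr

theorem shiftedGenerators_subset (hσ : IsShiftMatrix s) :
    shiftedGenerators k n s ⊆ (shiftedLieSubalgebra k (X : k[X]) s hσ.le_add : Set _) := by
  rintro A ((⟨i, r, rfl⟩ | ⟨i, j, r, -, hr, rfl⟩) | ⟨i, j, r, -, hr, rfl⟩)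
  · exact single_mem_shiftedLieSubalgebra k _ ((hσ.diag_eq_zero i).trans_le r.zero_le)
  all_goals exact single_mem_shiftedLieSubalgebra k _ hr

theorem shiftedLieSubalgebra_le_lieSpan (hσ : IsShiftMatrix s) :
    shiftedLieSubalgebra k (X : k[X]) s hσ.le_add ≤ 𝔤 := by
  intro A hA
  rw [Matrix.matrix_eq_sum_single A]
  exact Submodule.sum_mem _ fun i _ => Submodule.sum_mem _ fun j _ =>
    single_mem_of_X_pow_dvd (𝔤).toSubmodule (fun _ hr => E_mem_lieSpan k hσ hr) (hA i j)

end Generators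

/-- Given a shift matrix `σ = (s_{i,j})`, the subspace
`g_σ = {A ∈ gl_n(k[t]) : t^{s_{i,j}} ∣ A_{i,j} for all i,j}` is a Lie subalgebra of
`gl_n(k[t])`, and it is generated as a Lie algebra by the elements `e_{i,i}t^r` (all `r`),
`e_{i,i+1}t^r` (`r ≥ s_{i,i+1}`) and `e_{i+1,i}t^r` (`r ≥ s_{i+1,i}`). -/
theorem shifted_current_algebra_is_lie_subalgebra_with_generators
    (k : Type) [Field k] (n : ℕ) (s : Fin n → Fin n → ℕ)
    (hσ : ∀ i j l : Fin n,
      |(i : ℤ) - (j : ℤ)| + |(j : ℤ) - (l : ℤ)| = |(i : ℤ) - (l : ℤ)| →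
      s i j + s j l = s i l) :
    ∃ L : LieSubalgebra k (Matrix (Fin n) (Fin n) (Polynomial k)),
      (L : Set (Matrix (Fin n) (Fin n) (Polynomial k))) =
        {A | ∀ i j : Fin n, (Polynomial.X : Polynomial k) ^ s i j ∣ A i j} ∧
      LieSubalgebra.lieSpan k (Matrix (Fin n) (Fin n) (Polynomial k))
        ({A | ∃ (i : Fin n) (r : ℕ), A = E k n i i r} ∪
         {A | ∃ (i j : Fin n) (r : ℕ), (j : ℕ) = (i : ℕ) + 1 ∧ s i j ≤ r ∧ A = E k n i j r} ∪
         {A | ∃ (i j : Fin n) (r : ℕ), (i : ℕ) = (j : ℕ) + 1 ∧ s i j ≤ r ∧ A = E k n i j r})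
        = L :=
  ⟨shiftedLieSubalgebra k X s (IsShiftMatrix.le_add hσ), rfl,
    le_antisymm (LieSubalgebra.lieSpan_le.mpr (shiftedGenerators_subset k hσ))
      (shiftedLieSubalgebra_le_lieSpan k hσ)⟩

end CurrentAlgebraPaper
end

section
/- (Series of type II, top coefficient.) Let (d_r)_{r≥0} be natural numbers with d_0 = 0, and for μ ∈ ℕ^n set d_μ := d_{μ_1}+⋯+d_{μ_n}. Call an integer r > 1 optimal if d_μ < d_r for every μ ∈ ℕ^n such that either |μ| < r, or |μ| = r and μ has more than one nonzero part. Suppose given pairwise commuting elements X_i^{(r)} ∈ F_{d_r} A for 1 ≤ i ≤ n and r ≥ 1, and set X_i^{(0)} := 1. Let X_II^{(r)} be the u^{−r}-coefficient of the ordered product ∏_{i=1}^{n} (Σ_{s≥0} X_i^{(s)} (u−(i−1))^{−s}). Then X_II^{(1)} = X_1^{(1)} + ⋯ + X_n^{(1)} ∈ F_{d_1} A; and if r > 1 is optimal, then X_II^{(r)} ∈ F_{d_r} A and X_II^{(r)} − (X_1^{(r)} + ⋯ + X_n^{(r)}) ∈ F_{d_r − 1} A. -/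
/-!
Expanding the ordered product (the `X_i^{(s)}` commute, so this can be done in the commutative
subring they generate), the `u^{-r}`-coefficient is a sum over `l ∈ ℕⁿ` with `|l| = r` and
`σ ≤ l` of natural multiples of the monomials `∏ X_i^{(σ_i)} ∈ F_{d_σ}`, the term `σ = l`
occurring with multiplier `1`. Optimality puts in `F_{d_r - 1}` both the terms with `σ ≠ l`,
which have `|σ| < r`, and the terms `σ = l` for `l` with more than one nonzero part. What is
left are the terms `l = r eᵢ`, which sum to `X_1^{(r)} + ⋯ + X_n^{(r)}`.
-/

/-- Given the coefficient sequence `a` of a series `f(u) = Σ_s a_s u^{-s}`, this is the series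
`f(u - c) = Σ_t (Σ_{s ≤ t} C(t-1, t-s) c^{t-s} a_s) u^{-t}`, as a power series in `u⁻¹`. -/
noncomputable def shiftSer (A : Type) [Ring A] (c : ℕ) (a : ℕ → A) : PowerSeries A :=
  PowerSeries.mk fun t =>
    ∑ s ∈ Finset.range (t + 1), (Nat.choose (t - 1) (t - s) * c ^ (t - s)) • a s

open PowerSeries Finset

def IsOptimal (d : ℕ → ℕ) (n r : ℕ) : Prop :=
  ∀ μ : Fin n → ℕ, ((∑ i, μ i) < r ∨ ((∑ i, μ i) = r ∧ 1 < #{i | μ i ≠ 0})) →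
    ∑ i, d (μ i) < d r

theorem filter_card_support_le_one_finsuppAntidiag {ι : Type*} [DecidableEq ι] (s : Finset ι)
    {r : ℕ} (hr : r ≠ 0) :
    {l ∈ finsuppAntidiag s r | #l.support ≤ 1} =
      s.map ⟨fun i => Finsupp.single i r, Finsupp.single_left_injective hr⟩ := by
  ext l
  simp only [mem_filter, mem_finsuppAntidiag, mem_map, Function.Embedding.coeFn_mk]
  constructor
  · rintro ⟨⟨hsum, hsupp⟩, hcard⟩
    have hl0 : l ≠ 0 := by
      rintro rfl
      simp [eq_comm, hr] at hsum
    obtain ⟨i, b, hb, rfl⟩ := Finsupp.card_support_eq_one'.mp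
      (hcard.antisymm (card_pos.mpr (Finsupp.support_nonempty_iff.mpr hl0)))
    have hi : i ∈ s := hsupp (by simp [hb])
    obtain rfl : b = r := by simpa [Finsupp.single_eq_pi_single, hi] using hsum
    exact ⟨i, hi, rfl⟩
  · rintro ⟨i, hi, rfl⟩
    simp [Finsupp.support_single _ hr, Finsupp.single_eq_pi_single, hi]

section Ring

variable {R : Type} [Ring R]

theorem coeff_shiftSer (c : ℕ) (a : ℕ → R) (t : ℕ) :
    coeff t (shiftSer R c a) =
      ∑ s ∈ range (t + 1), ((t - 1).choose (t - s) * c ^ (t - s)) • a s :=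
  coeff_mk _ _

theorem constantCoeff_shiftSer (c : ℕ) (a : ℕ → R) : constantCoeff (shiftSer R c a) = a 0 := by
  simp [← coeff_zero_eq_constantCoeff_apply, coeff_shiftSer]

theorem coeff_one_shiftSer (c : ℕ) (a : ℕ → R) : coeff 1 (shiftSer R c a) = a 1 := by
  simp [coeff_shiftSer, sum_range_succ]

theorem map_shiftSer {S : Type} [Ring S] (φ : R →+* S) (c : ℕ) (a : ℕ → R) :
    map φ (shiftSer R c a) = shiftSer S c (φ ∘ a) := by
  ext t
  simp [coeff_shiftSer]

end Ring

section CommRing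

variable {R : Type} [CommRing R]

theorem coeff_one_prod_of_constantCoeff_eq_one {ι : Type*} (s : Finset ι) (f : ι → R⟦X⟧)
    (hf : ∀ i ∈ s, constantCoeff (f i) = 1) :
    coeff 1 (∏ i ∈ s, f i) = ∑ i ∈ s, coeff 1 (f i) := by
  classical
  induction s using Finset.induction_on with
  | empty => simp
  | insert j s hj ih =>
    have hs : ∀ i ∈ s, constantCoeff (f i) = 1 := fun i hi => hf i (mem_insert_of_mem hi)
    rw [prod_insert hj, sum_insert hj, coeff_one_mul, map_prod, prod_eq_one hs,
      hf j (mem_insert_self j s), ih hs, mul_one, mul_one, add_comm]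

variable {n : ℕ} {a : Fin n → ℕ → R}

theorem coeff_one_prod_shiftSer (ha0 : ∀ i, a i 0 = 1) (c : Fin n → ℕ) :
    coeff 1 (∏ i, shiftSer R (c i) (a i)) = ∑ i, a i 1 := by
  rw [coeff_one_prod_of_constantCoeff_eq_one _ _ fun i _ => by rw [constantCoeff_shiftSer, ha0]]
  simp only [coeff_one_shiftSer]

theorem coeff_prod_shiftSer (c : Fin n → ℕ) (a : Fin n → ℕ → R) (r : ℕ) :
    coeff r (∏ i, shiftSer R (c i) (a i)) =
      ∑ l ∈ finsuppAntidiag univ r, ∑ σ ∈ Fintype.piFinset fun i => range (l i + 1),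
        (∏ i, (l i - 1).choose (l i - σ i) * c i ^ (l i - σ i)) • ∏ i, a i (σ i) := by
  rw [coeff_prod]
  refine sum_congr rfl fun l _ => ?_
  simp_rw [coeff_shiftSer, prod_univ_sum, nsmul_eq_mul, Nat.cast_prod, prod_mul_distrib]

variable (F : ℕ → AddSubgroup R) [SetLike.GradedMonoid F] (hF : Monotone F) {d : ℕ → ℕ}
  (ha : ∀ i s, a i s ∈ F (d s))
include hF ha

theorem prod_mem_sub_one_of_sum_lt {μ : Fin n → ℕ} {r : ℕ} (hμ : ∑ i, d (μ i) < d r) :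
    ∏ i, a i (μ i) ∈ F (d r - 1) :=
  hF (Nat.le_sub_one_of_lt hμ) (SetLike.prod_mem_graded F _ _ fun i _ => ha i (μ i))

theorem coeff_prod_shiftSer_sub_mem (c : Fin n → ℕ) {r : ℕ} (hopt : IsOptimal d n r) :
    coeff r (∏ i, shiftSer R (c i) (a i)) - ∑ l ∈ finsuppAntidiag univ r, ∏ i, a i (l i) ∈
      F (d r - 1) := by
  rw [coeff_prod_shiftSer, ← sum_sub_distrib]
  refine sum_mem fun l hl => ?_
  have hl_mem : ⇑l ∈ Fintype.piFinset fun i => range (l i + 1) := by simp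
  rw [← sum_erase_add _ _ hl_mem, add_sub_assoc]
  simp only [Nat.sub_self, Nat.choose_zero_right, pow_zero, mul_one, prod_const_one, one_smul,
    sub_self, add_zero]
  refine sum_mem fun σ hσ => nsmul_mem (prod_mem_sub_one_of_sum_lt F hF ha (hopt σ (.inl ?_))) _
  obtain ⟨hσl, hσ⟩ := mem_erase.mp hσ
  have hle : σ ≤ ⇑l := fun i => Nat.lt_succ_iff.mp (by simpa using Fintype.mem_piFinset.mp hσ i)
  rw [← (mem_finsuppAntidiag.mp hl).1]
  exact Fintype.sum_strictMono (lt_of_le_of_ne hle hσl)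

theorem sum_prod_finsuppAntidiag_sub_mem (ha0 : ∀ i, a i 0 = 1) {r : ℕ} (hr : 0 < r)
    (hopt : IsOptimal d n r) :
    ∑ l ∈ finsuppAntidiag univ r, ∏ i, a i (l i) - ∑ i, a i r ∈ F (d r - 1) := by
  have hprod_single (i : Fin n) : ∏ j, a j (Finsupp.single i r j) = a i r := by
    rw [prod_eq_single i (fun j _ hj => by simp [Ne.symm hj, ha0])
      fun h => absurd (mem_univ i) h, Finsupp.single_eq_same]
  rw [← sum_filter_add_sum_filter_not _ (fun l => #l.support ≤ 1),
    filter_card_support_le_one_finsuppAntidiag _ hr.ne', sum_map]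
  simp only [Function.Embedding.coeFn_mk, hprod_single, add_sub_cancel_left]
  refine sum_mem fun l hl => ?_
  obtain ⟨hl, hcard⟩ := mem_filter.mp hl
  refine prod_mem_sub_one_of_sum_lt F hF ha (hopt l (.inr ⟨(mem_finsuppAntidiag.mp hl).1, ?_⟩))
  refine (not_le.mp hcard).trans_eq (congrArg card ?_)
  ext
  simp

theorem coeff_prod_shiftSer_sub_sum_mem (ha0 : ∀ i, a i 0 = 1) (c : Fin n → ℕ) {r : ℕ}
    (hr : 0 < r) (hopt : IsOptimal d n r) :
    coeff r (∏ i, shiftSer R (c i) (a i)) - ∑ i, a i r ∈ F (d r - 1) := by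
  simpa using add_mem (coeff_prod_shiftSer_sub_mem F hF ha c hopt)
    (sum_prod_finsuppAntidiag_sub_mem F hF ha ha0 hr hopt)

end CommRing

open scoped IsMulCommutative in
theorem coeff_listProd_shiftSer_filtration {A : Type} [Ring A] (F : ℕ → AddSubgroup A)
    [SetLike.GradedMonoid F] (hF : Monotone F) {d : ℕ → ℕ} {n : ℕ} {a : Fin n → ℕ → A}
    (hcomm : ∀ i j r s, Commute (a i r) (a j s)) (ha0 : ∀ i, a i 0 = 1)
    (ha : ∀ i s, a i s ∈ F (d s)) (c : Fin n → ℕ) :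
    coeff 1 ((List.finRange n).map fun i => shiftSer A (c i) (a i)).prod = ∑ i, a i 1 ∧
    ∀ r, 0 < r → IsOptimal d n r →
      coeff r ((List.finRange n).map fun i => shiftSer A (c i) (a i)).prod - ∑ i, a i r ∈
        F (d r - 1) := by
  let B := Subring.closure (Set.range fun q : Fin n × ℕ => a q.1 q.2)
  have : IsMulCommutative B := Subring.isMulCommutative_closure <| by
    rintro _ ⟨⟨i, r⟩, rfl⟩ _ ⟨⟨j, s⟩, rfl⟩
    exact hcomm i j r s
  let b : Fin n → ℕ → B := fun i s => ⟨a i s, Subring.subset_closure ⟨(i, s), rfl⟩⟩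
  let G : ℕ → AddSubgroup B := fun r => (F r).comap B.subtype.toAddMonoidHom
  have : SetLike.GradedMonoid G :=
    { one_mem := SetLike.GradedOne.one_mem (A := F)
      mul_mem := fun _ _ _ _ hx hy => SetLike.GradedMul.mul_mem (A := F) hx hy }
  have hprod : ((List.finRange n).map fun i => shiftSer A (c i) (a i)).prod =
      map B.subtype (∏ i, shiftSer B (c i) (b i)) := by
    simp_rw [Fin.prod_univ_def, map_list_prod, List.map_map, Function.comp_def, map_shiftSer]
    rfl
  have hsum (r : ℕ) : ∑ i, a i r = B.subtype (∑ i, b i r) := by simp [b]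
  have hb0 (i : Fin n) : b i 0 = 1 := Subtype.ext (ha0 i)
  refine ⟨?_, fun r hr hopt => ?_⟩
  · rw [hprod, coeff_map, hsum, coeff_one_prod_shiftSer hb0]
  · rw [hprod, coeff_map, hsum, ← map_sub]
    exact coeff_prod_shiftSer_sub_sum_mem G (fun _ _ h _ hx => hF h hx) ha hb0 c hr hopt

theorem typeII_series_general
    (k : Type) [Field k]
    (A : Type) [Ring A] [Algebra k A]
    (F : ℕ → Submodule k A) (hmono : Monotone F) (hone : (1 : A) ∈ F 0)
    (hmul : ∀ r s : ℕ, ∀ x y : A, x ∈ F r → y ∈ F s → x * y ∈ F (r + s))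
    (n : ℕ) (d : ℕ → ℕ) (hd0 : d 0 = 0)
    (X : Fin n → ℕ → A) (hX0 : ∀ i, X i 0 = 1)
    (hXcomm : ∀ (i j : Fin n) (r s : ℕ), X i r * X j s = X j s * X i r)
    (hXF : ∀ (i : Fin n) (r : ℕ), 1 ≤ r → X i r ∈ F (d r)) :
    (PowerSeries.coeff (R := A) 1 (((List.finRange n).map fun i : Fin n => shiftSer A (i : ℕ) (X i)).prod)
        = ∑ i : Fin n, X i 1 ∧
      PowerSeries.coeff (R := A) 1 (((List.finRange n).map fun i : Fin n => shiftSer A (i : ℕ) (X i)).prod)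
        ∈ F (d 1)) ∧
    (∀ r : ℕ, 1 < r →
      (∀ μ : Fin n → ℕ,
        ((∑ i, μ i) < r ∨
          ((∑ i, μ i) = r ∧ 1 < (Finset.univ.filter fun i => μ i ≠ 0).card)) →
        (∑ i, d (μ i)) < d r) →
      PowerSeries.coeff (R := A) r (((List.finRange n).map fun i : Fin n => shiftSer A (i : ℕ) (X i)).prod)
        ∈ F (d r) ∧
      PowerSeries.coeff (R := A) r (((List.finRange n).map fun i : Fin n => shiftSer A (i : ℕ) (X i)).prod)
        - (∑ i : Fin n, X i r) ∈ F (d r - 1)) := by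
  let G : ℕ → AddSubgroup A := fun r => (F r).toAddSubgroup
  have : SetLike.GradedMonoid G := { one_mem := hone, mul_mem := fun _ _ _ _ => hmul _ _ _ _ }
  have hXG (i : Fin n) (s : ℕ) : X i s ∈ G (d s) := by
    rcases Nat.eq_zero_or_pos s with rfl | hs
    · rw [hX0, hd0]
      exact hone
    · exact hXF i s hs
  have hsum_mem (r : ℕ) (hr : 1 ≤ r) : ∑ i, X i r ∈ F (d r) := sum_mem fun i _ => hXF i r hr
  obtain ⟨hcoeff_one, hcoeff_sub⟩ := coeff_listProd_shiftSer_filtration G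
    (fun _ _ h _ hx => hmono h hx) hXcomm hX0 hXG (fun i => (i : ℕ))
  refine ⟨⟨hcoeff_one, hcoeff_one ▸ hsum_mem 1 le_rfl⟩, fun r hr hopt => ?_⟩
  have hsub := hcoeff_sub r (by omega) hopt
  exact ⟨by simpa using add_mem (hmono (Nat.sub_le _ 1) hsub) (hsum_mem r (by omega)), hsub⟩

/-- **series of type II, top coefficient.** With `(d_r)` as below, commuting
elements `X_i^{(r)} ∈ F_{d_r} A` (`X_i^{(0)} = 1`), and `X_II^{(r)}` the `u^{-r}`-coefficient
of `∏_{i=1}^{n} Σ_s X_i^{(s)} (u-(i-1))^{-s}`, one has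
`X_II^{(1)} = X_1^{(1)} + ⋯ + X_n^{(1)} ∈ F_{d_1} A`, and for any optimal `r > 1`,
`X_II^{(r)} ∈ F_{d_r} A` and `X_II^{(r)} ≡ X_1^{(r)} + ⋯ + X_n^{(r)} mod F_{d_r - 1} A`. -/
theorem typeII_series
    (k : Type) [Field k] (p : ℕ) [Fact p.Prime] [CharP k p]
    (A : Type) [Ring A] [Algebra k A]
    (F : ℕ → Submodule k A) (hmono : Monotone F) (hone : (1 : A) ∈ F 0)
    (hmul : ∀ r s : ℕ, ∀ x y : A, x ∈ F r → y ∈ F s → x * y ∈ F (r + s))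
    (n : ℕ) (d : ℕ → ℕ) (hd0 : d 0 = 0)
    (X : Fin n → ℕ → A) (hX0 : ∀ i, X i 0 = 1)
    (hXcomm : ∀ (i j : Fin n) (r s : ℕ), X i r * X j s = X j s * X i r)
    (hXF : ∀ (i : Fin n) (r : ℕ), 1 ≤ r → X i r ∈ F (d r)) :
    (PowerSeries.coeff (R := A) 1 (((List.finRange n).map fun i : Fin n => shiftSer A (i : ℕ) (X i)).prod)
        = ∑ i : Fin n, X i 1 ∧
      PowerSeries.coeff (R := A) 1 (((List.finRange n).map fun i : Fin n => shiftSer A (i : ℕ) (X i)).prod)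
        ∈ F (d 1)) ∧
    (∀ r : ℕ, 1 < r →
      (∀ μ : Fin n → ℕ,
        ((∑ i, μ i) < r ∨
          ((∑ i, μ i) = r ∧ 1 < (Finset.univ.filter fun i => μ i ≠ 0).card)) →
        (∑ i, d (μ i)) < d r) →
      PowerSeries.coeff (R := A) r (((List.finRange n).map fun i : Fin n => shiftSer A (i : ℕ) (X i)).prod)
        ∈ F (d r) ∧
      PowerSeries.coeff (R := A) r (((List.finRange n).map fun i : Fin n => shiftSer A (i : ℕ) (X i)).prod)
        - (∑ i : Fin n, X i r) ∈ F (d r - 1)) :=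
  typeII_series_general k A F hmono hone hmul n d hd0 X hX0 hXcomm hXF
end

section
/- (Series of type III, top coefficient.) Suppose given pairwise commuting elements X^{(r)} ∈ F_{r−1} A for all r ≥ 1, and set X^{(0)} := 1. Let X_III^{(r)} be the u^{−r}-coefficient of the product ∏_{i=1}^{p} (Σ_{s≥0} X^{(s)} (u−(i−1))^{−s}). Then: X_III^{(0)} = 1; X_III^{(r)} = 0 for 1 ≤ r ≤ p−1; X_III^{(p)} = (X^{(1)})^p − X^{(1)} ∈ F_0 A; if r > p and p ∣ r then X_III^{(r)} ∈ F_{r−p} A and X_III^{(r)} − ((X^{(r/p)})^p − X^{(r−p+1)}) ∈ F_{r−p−1} A; and if r > p and p ∤ r then X_III^{(r)} ∈ F_{r−p−1} A. -/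
/-!
Give `u⁻¹` filtration degree `1`: a series lies in level `d` when its `u^{-t}`-coefficient lies
in `F_{t-d}`. Write `Σ_s X^{(s)} u^{-s} = 1 + h` and `H_c = h(u - c)`; then `h` and all `H_c`
lie in level `1`, and `H_c ≡ h` modulo level `2`. The product is `Σ_m e_m(H_0, …, H_{p-1})`.
Since `Σ_{c<p} c^e` vanishes in `k` unless `e > 0` and `p - 1 ∣ e`, the power sums `Σ_c H_c^j`
lie in level `j + p - 1`, and Newton's identities (dividing only by `m < p`) put `e_m` in level
`m + p - 1`. So modulo level `p + 1` the product is `1 + e_1 + ∏_c H_c ≡ 1 + e_1 + h^p =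
(1 + h)^p + e_1`, whose `u^{-r}`-coefficient is `(X^{(r/p)})^p` (or `0` if `p ∤ r`) plus that
of `e_1`. Modulo level `p + 1` the latter is `-C(r-1, p-1) X^{(r-p+1)}`, and by Lucas
`C(r-1, p-1) ≡ 1` or `0` according as `p ∣ r` or not. As the `X^{(r)}` commute, all of this
takes place in the commutative subalgebra they generate.
-/

open Finset PowerSeries

section CharP

variable {k : Type*} [Ring k] (p : ℕ) [hp : Fact p.Prime] [CharP k p]

lemma ZMod.sum_pow_eq_ite (e : ℕ) :
    ∑ x : ZMod p, x ^ e = if e ≠ 0 ∧ p - 1 ∣ e then -1 else 0 := by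
  classical
  rw [← Fintype.sum_subtype_add_sum_subtype (· ≠ 0),
    ← Fintype.sum_equiv unitsEquivNeZero (fun u => (u : ZMod p) ^ e) _ (fun _ => rfl),
    FiniteField.sum_pow_units, ZMod.card]
  have hzero : ∑ x : {x : ZMod p // ¬x ≠ 0}, (x : ZMod p) ^ e = 0 ^ e := by
    rw [Fintype.sum_eq_single ⟨0, not_not.mpr rfl⟩
      fun x hx => absurd (Subtype.ext (not_not.mp x.2)) hx]
  rw [hzero]
  rcases eq_or_ne e 0 with rfl | he <;> simp [*]

lemma sum_range_natCast_pow (e : ℕ) :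
    ∑ c ∈ range p, (c : k) ^ e = if e ≠ 0 ∧ p - 1 ∣ e then -1 else 0 := by
  have h := congrArg (ZMod.castHom dvd_rfl k) (ZMod.sum_pow_eq_ite p e)
  rw [map_sum, apply_ite (ZMod.castHom dvd_rfl k), map_neg, map_one, map_zero] at h
  rw [← h, ← Fin.sum_univ_eq_sum_range]
  have hbij : Function.Bijective fun i : Fin p => ((i : ℕ) : ZMod p) := by
    refine (Fintype.bijective_iff_injective_and_card _).mpr ⟨fun i j hij => ?_, by simp⟩
    exact Fin.ext (by simpa [ZMod.natCast_eq_natCast_iff', Nat.mod_eq_of_lt] using hij)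
  exact Fintype.sum_bijective _ hbij _ _ fun i => by simp

lemma cast_choose_sub_one_sub_one {t : ℕ} (ht : t ≠ 0) :
    (((t - 1).choose (p - 1) : ℕ) : k) = if p ∣ t then 1 else 0 := by
  have hp1 : 0 < p := hp.out.pos
  have lucas := (CharP.natCast_eq_natCast k p).mpr
    (Choose.choose_modEq_choose_mod_mul_choose_div_nat (n := t - 1) (k := p - 1) (p := p))
  rw [lucas, Nat.mod_eq_of_lt (by omega : p - 1 < p), Nat.div_eq_of_lt (by omega : p - 1 < p),
    Nat.choose_zero_right, mul_one]
  have hmod : (t - 1) % p < p := Nat.mod_lt _ hp1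
  have hdvd : p ∣ t ↔ (t - 1) % p = p - 1 := by
    have hdiv := Nat.div_add_mod (t - 1) p
    have ht' : t = p * ((t - 1) / p) + ((t - 1) % p + 1) := by omega
    have hsplit := Nat.dvd_add_right (c := (t - 1) % p + 1) (dvd_mul_right p ((t - 1) / p))
    rw [← ht'] at hsplit
    rw [hsplit]
    refine ⟨fun h => ?_, fun h => by rw [h, Nat.sub_add_cancel hp1]⟩
    have := Nat.le_of_dvd (by omega) h
    omega
  split_ifs with h
  · rw [hdvd.mp h, Nat.choose_self, Nat.cast_one]
  · rw [Nat.choose_eq_zero_of_lt (by omega), Nat.cast_zero]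

end CharP

lemma PowerSeries.coeff_pow_char {R : Type*} [CommRing R] (p : ℕ) [ExpChar R p]
    (f : PowerSeries R) (n : ℕ) :
    coeff n (f ^ p) = if p ∣ n then coeff (n / p) f ^ p else 0 := by
  have hp : p ≠ 0 := expChar_ne_zero R p
  rw [← MvPowerSeries.map_frobenius_expand p hp (f := f)]
  change coeff n (PowerSeries.map (frobenius R p) (PowerSeries.expand p hp f)) = _
  rw [coeff_map, coeff_expand]
  split_ifs <;> simp [frobenius_def, zero_pow hp]

lemma list_prod_map_range {M : Type*} [CommMonoid M] (f : ℕ → M) (n : ℕ) :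
    ((List.range n).map f).prod = ∏ i ∈ range n, f i := by
  rw [prod_eq_multiset_prod, range_val, Multiset.range, Multiset.map_coe, Multiset.prod_coe]

lemma neg_one_pow_mul_mem {R S : Type*} [Ring R] [SetLike S R] [AddSubgroupClass S R] {M : S}
    (n : ℕ) {y : R} (hy : y ∈ M) : (-1) ^ n * y ∈ M := by
  rcases neg_one_pow_eq_or R n with h | h <;> simp [h, hy]

lemma prod_sub_pow_mem_of_sub_mem {R ι S : Type*} [CommRing R] [SetLike S R]
    [AddSubgroupClass S R] {G : ℕ → S} [SetLike.GradedMonoid G] (s : Finset ι) {x : ι → R}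
    {y : R} {d : ℕ} (hx : ∀ i ∈ s, x i ∈ G d) (hy : y ∈ G d)
    (hxy : ∀ i ∈ s, x i - y ∈ G (d + 1)) :
    ∏ i ∈ s, x i - y ^ s.card ∈ G (s.card * d + 1) := by
  classical
  induction s using Finset.induction_on with
  | empty => simp
  | insert a s ha ih =>
    rw [prod_insert ha, card_insert_of_notMem ha,
      show x a * ∏ i ∈ s, x i - y ^ (s.card + 1)
        = x a * (∏ i ∈ s, x i - y ^ s.card) + (x a - y) * y ^ s.card by ring]
    have h₁ := SetLike.mul_mem_graded (hx a (mem_insert_self a s))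
      (ih (fun i hi => hx i (mem_insert_of_mem hi)) (fun i hi => hxy i (mem_insert_of_mem hi)))
    have h₂ := SetLike.mul_mem_graded (hxy a (mem_insert_self a s))
      (SetLike.pow_mem_graded s.card hy)
    rw [show d + (s.card * d + 1) = (s.card + 1) * d + 1 by ring] at h₁
    rw [smul_eq_mul, show d + 1 + s.card * d = (s.card + 1) * d + 1 by ring] at h₂
    exact add_mem h₁ h₂

namespace MvPolynomial

open scoped Nat

variable {R σ : Type*} [CommRing R] [Fintype σ]

lemma prod_one_add_eq_sum_eval_esymm (x : σ → R) :
    ∏ i, (1 + x i) = ∑ m ∈ range (Fintype.card σ + 1), eval x (esymm σ R m) := by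
  rw [prod_one_add, sum_powerset, card_univ]
  simp [esymm, map_sum, map_prod]

lemma eval_esymm_card (x : σ → R) : eval x (esymm σ R (Fintype.card σ)) = ∏ i, x i := by
  simp [esymm, ← card_univ, powersetCard_self, map_prod]

theorem eval_esymm_mem_of_psum_mem {k : Type*} [Field k] [Algebra k R]
    {G : ℕ → Submodule k R} [SetLike.GradedMonoid G] (hG : Antitone G) (x : σ → R) (a : ℕ)
    (hx : ∀ j, 1 ≤ j → ∑ i, x i ^ j ∈ G (j + a)) :
    ∀ m, 1 ≤ m → (m ! : k) ≠ 0 → eval x (esymm σ R m) ∈ G (m + a) := by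
  intro m
  induction m using Nat.strong_induction_on with
  | _ m ih =>
  intro hm hmk
  have newton := congrArg (eval x) (mul_esymm_eq_sum σ R m)
  simp only [map_mul, map_pow, map_neg, map_one, map_natCast, map_sum, psum, eval_X] at newton
  have hmul : (m : R) * eval x (esymm σ R m) ∈ G (m + a) := by
    rw [newton]
    refine neg_one_pow_mul_mem _ (sum_mem fun n hn => ?_)
    obtain ⟨hn, hlt⟩ := mem_filter.mp hn
    rw [HasAntidiagonal.mem_antidiagonal] at hn
    rw [mul_assoc]
    refine neg_one_pow_mul_mem _ ?_
    rcases Nat.eq_zero_or_pos n.1 with h0 | hpos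
    · simpa [h0, esymm_zero, ← hn] using hx n.2 (by omega)
    · have hfac : (n.1 ! : k) ≠ 0 := fun h => by
        obtain ⟨q, hq⟩ := Nat.factorial_dvd_factorial hlt.le
        exact hmk (by rw [hq, Nat.cast_mul, h, zero_mul])
      refine hG ?_ (SetLike.mul_mem_graded (ih n.1 hlt hpos hfac) (hx n.2 (by omega)))
      omega
  have hm0 : (m : k) ≠ 0 := fun h => by
    obtain ⟨q, hq⟩ := Nat.dvd_factorial hm le_rfl
    exact hmk (by rw [hq, Nat.cast_mul, h, zero_mul])
  rw [← map_natCast (algebraMap k R), ← Algebra.smul_def] at hmul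
  simpa [hm0] using Submodule.smul_mem _ (m : k)⁻¹ hmul

end MvPolynomial

namespace TypeIII

section Filtration

variable {k B : Type*} [CommRing k] [Ring B] [Algebra k B] {F : ℕ → Submodule k B}

def fil (F : ℕ → Submodule k B) (d t : ℕ) : Submodule k B :=
  if d ≤ t then F (t - d) else ⊥

lemma fil_of_le {d t : ℕ} (h : d ≤ t) : fil F d t = F (t - d) := if_pos h

lemma fil_of_lt {d t : ℕ} (h : t < d) : fil F d t = ⊥ := if_neg (by omega)

lemma eq_zero_of_mem_fil {d t : ℕ} (h : t < d) {x : B} (hx : x ∈ fil F d t) : x = 0 := by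
  rwa [fil_of_lt h, Submodule.mem_bot] at hx

lemma fil_le_fil (hF : Monotone F) {d t d' t' : ℕ} (h : t + d' ≤ t' + d) :
    fil F d t ≤ fil F d' t' := by
  unfold fil
  split_ifs
  · exact hF (by omega)
  · omega
  · exact bot_le
  · exact bot_le

lemma mul_mem_fil [SetLike.GradedMonoid F] {d e t s : ℕ} {x y : B} (hx : x ∈ fil F d t)
    (hy : y ∈ fil F e s) : x * y ∈ fil F (d + e) (t + s) := by
  unfold fil at *
  split_ifs at hx hy
  · rw [if_pos (by omega), show t + s - (d + e) = (t - d) + (s - e) by omega]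
    exact SetLike.mul_mem_graded hx hy
  all_goals simp_all

lemma map_mem_fil {A : Type*} [Ring A] [Algebra k A] (φ : B →ₗ[k] A)
    {F : ℕ → Submodule k A} {d t : ℕ} {x : B} (hx : x ∈ fil (fun n => (F n).comap φ) d t) :
    φ x ∈ fil F d t := by
  unfold fil at *
  split_ifs at hx ⊢
  · exact hx
  · simp_all

def serFil (F : ℕ → Submodule k B) (d : ℕ) : Submodule k (PowerSeries B) where
  carrier := {f | ∀ t, coeff t f ∈ fil F d t}
  add_mem' hf hg t := by simpa using add_mem (hf t) (hg t)
  zero_mem' t := by simp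
  smul_mem' c f hf t := by simpa using Submodule.smul_mem _ c (hf t)

lemma serFil_antitone (hF : Monotone F) : Antitone (serFil F) :=
  fun _ _ h _ hf t => fil_le_fil hF (by omega) (hf t)

instance [SetLike.GradedMonoid F] : SetLike.GradedMonoid (serFil F) where
  one_mem t := by
    rw [coeff_one]
    split_ifs with h
    · simpa [h, fil_of_le] using SetLike.one_mem_graded F
    · exact zero_mem _
  mul_mem d e f g hf hg t := by
    rw [coeff_mul]
    refine sum_mem fun x hx => ?_
    rw [← mem_antidiagonal.mp hx]
    exact mul_mem_fil (hf _) (hg _)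

lemma mk_sub_one_mem_serFil {a : ℕ → B} (ha0 : a 0 = 1)
    (haF : ∀ r, 1 ≤ r → a r ∈ F (r - 1)) : mk a - 1 ∈ serFil F 1 := fun t => by
  rcases t with _ | t
  · simp [ha0]
  · simpa [coeff_one, fil_of_le] using haF (t + 1) (by omega)

end Filtration

section Shift

variable {B : Type*} [CommRing B]

/-- `(u - c)⁻¹ = u⁻¹ (1 - c u⁻¹)⁻¹` as a series in `X = u⁻¹`. -/
noncomputable def shiftVar (c : ℕ) : PowerSeries B := X * rescale (c : B) (mk 1)

lemma coeff_shiftVar_pow (c s t : ℕ) :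
    coeff t (shiftVar c ^ s : PowerSeries B) =
      if s ≤ t then (((t - 1).choose (t - s) * c ^ (t - s) : ℕ) : B) else 0 := by
  rcases s with _ | d
  · rcases t with _ | t <;> simp [coeff_one]
  · rw [shiftVar, mul_pow, ← map_pow, mk_one_pow_eq_mk_choose_add, coeff_X_pow_mul']
    split_ifs with h
    · rw [coeff_rescale, coeff_mk, ← Nat.choose_symm (by omega : t - (d + 1) ≤ t - 1)]
      rw [show t - 1 - (t - (d + 1)) = d by omega, show d + (t - (d + 1)) = t - 1 by omega]
      push_cast
      ring
    · rfl

lemma hasSubst_shiftVar (c : ℕ) : HasSubst (shiftVar c : PowerSeries B) :=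
  HasSubst.of_constantCoeff_zero' (by simp [shiftVar])

noncomputable def shift (c : ℕ) : PowerSeries B →ₐ[B] PowerSeries B :=
  substAlgHom (hasSubst_shiftVar c)

lemma coeff_shift (c : ℕ) (f : PowerSeries B) (t : ℕ) :
    coeff t (shift c f) =
      ∑ s ∈ range (t + 1), ((t - 1).choose (t - s) * c ^ (t - s)) • coeff s f := by
  rw [shift, coe_substAlgHom, coeff_subst' (hasSubst_shiftVar c)]
  rw [finsum_eq_sum_of_support_subset _ (s := range (t + 1))]
  · refine sum_congr rfl fun s hs => ?_
    rw [coeff_shiftVar_pow, if_pos (by simpa [Nat.lt_succ_iff] using hs), smul_eq_mul,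
      nsmul_eq_mul, mul_comm]
  · intro s hs
    by_contra h
    simp only [coe_range, Set.mem_Iio, not_lt] at h
    exact hs (by dsimp only; rw [coeff_shiftVar_pow, if_neg (by omega), smul_zero])

variable {k : Type*} [CommRing k] [Algebra k B] {F : ℕ → Submodule k B}

lemma shift_mem_serFil (hF : Monotone F) {d : ℕ} {g : PowerSeries B} (hg : g ∈ serFil F d)
    (c : ℕ) : shift c g ∈ serFil F d := fun t => by
  rw [coeff_shift]
  refine sum_mem fun s hs => nsmul_mem (fil_le_fil hF ?_ (hg s)) _
  simp only [mem_range] at hs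
  omega

lemma shift_sub_self_mem_serFil (hF : Monotone F) {d : ℕ} {g : PowerSeries B}
    (hg : g ∈ serFil F d) (c : ℕ) : shift c g - g ∈ serFil F (d + 1) := fun t => by
  rw [map_sub, coeff_shift, sum_range_succ, Nat.sub_self, Nat.choose_zero_right, pow_zero,
    mul_one, one_smul, add_sub_cancel_right]
  refine sum_mem fun s hs => nsmul_mem (fil_le_fil hF ?_ (hg s)) _
  simp only [mem_range] at hs
  omega

variable (p : ℕ) [hp : Fact p.Prime] [CharP k p]

lemma coeff_sum_shift (g : PowerSeries B) (t : ℕ) :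
    coeff t (∑ c ∈ range p, shift c g) =
      -∑ s ∈ range (t + 1) with t - s ≠ 0 ∧ p - 1 ∣ t - s,
        ((t - 1).choose (t - s) : k) • coeff s g := by
  simp_rw [map_sum, coeff_shift]
  rw [sum_comm, sum_filter, ← sum_neg_distrib]
  refine sum_congr rfl fun s _ => ?_
  rw [← sum_smul, ← Nat.cast_smul_eq_nsmul k]
  push_cast
  rw [← mul_sum, sum_range_natCast_pow (k := k) p]
  split_ifs <;> simp

lemma sum_shift_mem_serFil (hF : Monotone F) {d : ℕ} {g : PowerSeries B}
    (hg : g ∈ serFil F d) : ∑ c ∈ range p, shift c g ∈ serFil F (d + (p - 1)) := fun t => by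
  rw [coeff_sum_shift (k := k)]
  refine neg_mem (sum_mem fun s hs => Submodule.smul_mem _ _ (fil_le_fil hF ?_ (hg s)))
  obtain ⟨-, he, hdvd⟩ := mem_filter.mp hs
  have := Nat.le_of_dvd (by omega) hdvd
  omega

lemma coeff_sum_shift_add_mem_fil (hF : Monotone F) {d : ℕ} {g : PowerSeries B}
    (hg : g ∈ serFil F d) {t : ℕ} (ht : p - 1 ≤ t) :
    coeff t (∑ c ∈ range p, shift c g) + ((t - 1).choose (p - 1) : k) • coeff (t - (p - 1)) g
      ∈ fil F (d + 2 * (p - 1)) t := by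
  have hp2 := hp.out.two_le
  have hmem : t - (p - 1) ∈ {s ∈ range (t + 1) | t - s ≠ 0 ∧ p - 1 ∣ t - s} := by
    simp only [mem_filter, mem_range]
    refine ⟨by omega, by omega, ?_⟩
    rw [Nat.sub_sub_self ht]
  rw [coeff_sum_shift (k := k), ← sum_erase_add _ _ hmem, Nat.sub_sub_self ht, neg_add,
    neg_add_cancel_right]
  refine neg_mem (sum_mem fun s hs => Submodule.smul_mem _ _ (fil_le_fil hF ?_ (hg s)))
  obtain ⟨hne, hs⟩ := mem_erase.mp hs
  obtain ⟨hs, he, q, hq⟩ := mem_filter.mp hs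
  simp only [mem_range] at hs
  have hq2 : 2 ≤ q := by
    by_contra! h
    interval_cases q <;> omega
  have := Nat.mul_le_mul_left (p - 1) hq2
  omega

end Shift

lemma shiftSer_eq_shift {B : Type} [CommRing B] (c : ℕ) (a : ℕ → B) :
    shiftSer B c a = shift c (mk a) := by
  ext t
  simp [shiftSer, coeff_shift]

lemma map_shiftSer {R S : Type} [Ring R] [Ring S] (φ : R →+* S) (c : ℕ) (a : ℕ → R) :
    PowerSeries.map φ (shiftSer R c a) = shiftSer S c (φ ∘ a) := by
  ext t
  simp [shiftSer, map_sum]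

section Product

open MvPolynomial

variable {k : Type*} [Field k] (p : ℕ) [hp : Fact p.Prime] [CharP k p]

theorem prod_one_add_shift_sub_mem {B : Type*} [CommRing B] [Algebra k B]
    {F : ℕ → Submodule k B} [SetLike.GradedMonoid F] (hF : Monotone F) {h : PowerSeries B}
    (hh : h ∈ serFil F 1) :
    ∏ c ∈ range p, (1 + shift c h) - (1 + h) ^ p - ∑ c ∈ range p, shift c h
      ∈ serFil F (p + 1) := by
  nontriviality B
  have : CharP (PowerSeries B) p := charP_of_injective_algebraMap' k p
  have hp2 := hp.out.two_le
  set H : Fin p → PowerSeries B := fun i => shift i h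
  set e : ℕ → PowerSeries B := fun m => eval H (esymm (Fin p) (PowerSeries B) m)
  have hprod : ∏ c ∈ range p, (1 + shift c h) = ∑ m ∈ range (p + 1), e m := by
    rw [← Fin.prod_univ_eq_prod_range (fun c => 1 + shift c h), prod_one_add_eq_sum_eval_esymm,
      Fintype.card_fin]
  have hsum : ∑ c ∈ range p, shift c h = e 1 := by
    simp [e, H, esymm_one, Fin.sum_univ_eq_sum_range (fun c => shift c h)]
  have hsplit : ∑ m ∈ range (p + 1), e m = 1 + e 1 + ∑ m ∈ Ico 2 p, e m + e p := by
    rw [sum_range_succ, range_eq_Ico, sum_eq_sum_Ico_succ_bot (by omega),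
      sum_eq_sum_Ico_succ_bot (by omega)]
    simp [e, esymm_zero, add_assoc]
  have hpsum : ∀ j, 1 ≤ j → ∑ i, H i ^ j ∈ serFil F (j + (p - 1)) := fun j _ => by
    simp only [H, ← map_pow]
    rw [Fin.sum_univ_eq_sum_range (fun c => shift c (h ^ j))]
    simpa using sum_shift_mem_serFil p hF (SetLike.pow_mem_graded j hh)
  have hmid : ∑ m ∈ Ico 2 p, e m ∈ serFil F (p + 1) := by
    refine sum_mem fun m hm => ?_
    rw [mem_Ico] at hm
    refine serFil_antitone hF (by omega) (eval_esymm_mem_of_psum_mem (serFil_antitone hF) H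
      (p - 1) hpsum m (by omega) ?_)
    rw [Ne, CharP.cast_eq_zero_iff k p, hp.out.dvd_factorial]
    omega
  have htop : e p - h ^ p ∈ serFil F (p + 1) := by
    have := prod_sub_pow_mem_of_sub_mem univ (x := H) (fun i _ => shift_mem_serFil hF hh i) hh
      (fun i _ => shift_sub_self_mem_serFil hF hh i)
    simpa [e, ← eval_esymm_card] using this
  rw [hprod, hsum, hsplit, add_pow_char]
  convert add_mem hmid htop using 1
  ring

theorem coeff_prod_shiftSer_sub_mem_fil {B : Type} [CommRing B] [Algebra k B]
    {F : ℕ → Submodule k B} [SetLike.GradedMonoid F] (hF : Monotone F) {a : ℕ → B}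
    (ha0 : a 0 = 1) (haF : ∀ r, 1 ≤ r → a r ∈ F (r - 1)) :
    (∀ r, coeff r ((List.range p).map fun m => shiftSer B m a).prod
        - (if p ∣ r then a (r / p) ^ p else 0) ∈ fil F p r) ∧
    (∀ r, p ≤ r → coeff r ((List.range p).map fun m => shiftSer B m a).prod
        - (if p ∣ r then a (r / p) ^ p else 0) + ((r - 1).choose (p - 1) : k) • a (r - p + 1)
        ∈ fil F (p + 1) r) := by
  nontriviality B
  have : ExpChar B p := have := charP_of_injective_algebraMap' k (A := B) p; .prime hp.out
  have hp2 := hp.out.two_le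
  have hh := mk_sub_one_mem_serFil ha0 haF
  have hprod : ((List.range p).map fun m => shiftSer B m a).prod
      = ∏ c ∈ range p, (1 + shift c (mk a - 1)) := by
    simp [list_prod_map_range, shiftSer_eq_shift]
  have hcore := prod_one_add_shift_sub_mem p hF hh
  rw [add_sub_cancel, ← hprod] at hcore
  set E := ∑ c ∈ range p, shift c (mk a - 1)
  have hcoeff : ∀ r, coeff r ((List.range p).map fun m => shiftSer B m a).prod
      - (if p ∣ r then a (r / p) ^ p else 0)
      = coeff r (((List.range p).map fun m => shiftSer B m a).prod - mk a ^ p - E)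
        + coeff r E := fun r => by
    simp [coeff_pow_char]
  refine ⟨fun r => ?_, fun r hr => ?_⟩
  · rw [hcoeff]
    exact add_mem (fil_le_fil hF (by omega) (hcore r))
      (fil_le_fil hF (by omega) (sum_shift_mem_serFil p hF hh r))
  · have hlow := coeff_sum_shift_add_mem_fil p hF hh (t := r) (by omega)
    rw [show r - (p - 1) = r - p + 1 by omega, map_sub, coeff_mk, PowerSeries.coeff_one,
      if_neg (by omega), sub_zero] at hlow
    rw [hcoeff, add_assoc]
    exact add_mem (hcore r) (fil_le_fil hF (by omega) hlow)

open scoped IsMulCommutative in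
theorem coeff_prod_shiftSer_sub_mem_fil_of_commute {A : Type} [Ring A] [Algebra k A]
    {F : ℕ → Submodule k A} [SetLike.GradedMonoid F] (hF : Monotone F) {X : ℕ → A}
    (hX0 : X 0 = 1) (hXcomm : ∀ r s, X r * X s = X s * X r)
    (hXF : ∀ r, 1 ≤ r → X r ∈ F (r - 1)) :
    (∀ r, coeff r ((List.range p).map fun m => shiftSer A m X).prod
        - (if p ∣ r then X (r / p) ^ p else 0) ∈ fil F p r) ∧
    (∀ r, p ≤ r → coeff r ((List.range p).map fun m => shiftSer A m X).prod
        - (if p ∣ r then X (r / p) ^ p else 0) + ((r - 1).choose (p - 1) : k) • X (r - p + 1)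
        ∈ fil F (p + 1) r) := by
  let S := Algebra.adjoin k (Set.range X)
  have := Algebra.isMulCommutative_adjoin k (s := Set.range X)
    (by rintro _ ⟨r, rfl⟩ _ ⟨s, rfl⟩; exact hXcomm r s)
  let Y : ℕ → S := fun n => ⟨X n, Algebra.subset_adjoin ⟨n, rfl⟩⟩
  let G : ℕ → Submodule k S := fun n => (F n).comap S.val.toLinearMap
  have : SetLike.GradedMonoid G :=
    { one_mem := by simpa [G] using SetLike.one_mem_graded F
      mul_mem := fun _ _ _ _ (hx : _ ∈ F _) (hy : _ ∈ F _) =>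
        SetLike.mul_mem_graded (A := F) hx hy }
  obtain ⟨h₁, h₂⟩ := coeff_prod_shiftSer_sub_mem_fil p (F := G)
    (fun _ _ h => Submodule.comap_mono (hF h)) (a := Y) (Subtype.ext hX0) hXF
  have hprod : ((List.range p).map fun m => shiftSer A m X).prod
      = PowerSeries.map S.val.toRingHom ((List.range p).map fun m => shiftSer S m Y).prod := by
    simp [map_list_prod, map_shiftSer, Function.comp_def, Y]
  refine ⟨fun r => ?_, fun r hr => ?_⟩
  · simpa [hprod, apply_ite, Y] using map_mem_fil S.val.toLinearMap (h₁ r)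
  · simpa [hprod, apply_ite, Y] using map_mem_fil S.val.toLinearMap (h₂ r hr)

end Product

section Conclusion

variable {k : Type*} [CommRing k] (p : ℕ) [hp : Fact p.Prime] [CharP k p]

theorem typeIII_of_mem_fil {A : Type*} [Ring A] [Algebra k A] {F : ℕ → Submodule k A}
    [SetLike.GradedMonoid F] {X : ℕ → A} (hX0 : X 0 = 1) (hXF : ∀ r, 1 ≤ r → X r ∈ F (r - 1))
    (c : ℕ → A) (h₁ : ∀ r, c r - (if p ∣ r then X (r / p) ^ p else 0) ∈ fil F p r)
    (h₂ : ∀ r, p ≤ r → c r - (if p ∣ r then X (r / p) ^ p else 0)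
      + ((r - 1).choose (p - 1) : k) • X (r - p + 1) ∈ fil F (p + 1) r) :
    c 0 = 1 ∧ (∀ r, 1 ≤ r → r < p → c r = 0) ∧ (c p = X 1 ^ p - X 1 ∧ X 1 ^ p - X 1 ∈ F 0) ∧
    (∀ r, p < r → p ∣ r →
      c r ∈ F (r - p) ∧ c r - (X (r / p) ^ p - X (r - p + 1)) ∈ F (r - p - 1)) ∧
    (∀ r, p < r → ¬ p ∣ r → c r ∈ F (r - p - 1)) := by
  have hp0 := hp.out.pos
  have hchoose {r : ℕ} (hr : p ≤ r) := cast_choose_sub_one_sub_one (k := k) p (t := r) (by omega)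
  refine ⟨?_, fun r hr hrp => ?_, ⟨?_, ?_⟩, fun r hr hdvd => ⟨?_, ?_⟩, fun r hr hdvd => ?_⟩
  · simpa [hX0, sub_eq_zero] using eq_zero_of_mem_fil hp0 (h₁ 0)
  · have hdvd : ¬ p ∣ r := fun h => by have := Nat.le_of_dvd (by omega) h; omega
    simpa [hdvd] using eq_zero_of_mem_fil hrp (h₁ r)
  · have := eq_zero_of_mem_fil (by omega) (h₂ p le_rfl)
    simp only [hchoose le_rfl, dvd_refl, if_true, Nat.div_self hp0, Nat.sub_self, zero_add,
      one_smul] at this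
    rw [← sub_eq_zero, ← this]
    abel
  · have hX1 : X 1 ∈ F 0 := hXF 1 le_rfl
    simpa using sub_mem (SetLike.pow_mem_graded p hX1) hX1
  · have hpow := SetLike.pow_mem_graded p (hXF (r / p) (Nat.div_pos hr.le hp0))
    rw [smul_eq_mul, Nat.mul_sub, Nat.mul_div_cancel' hdvd, mul_one] at hpow
    have := h₁ r
    rw [fil_of_le hr.le, if_pos hdvd] at this
    simpa using add_mem this hpow
  · have := h₂ r hr.le
    rw [fil_of_le (by omega), hchoose hr.le, if_pos hdvd, if_pos hdvd, one_smul,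
      show r - (p + 1) = r - p - 1 by omega] at this
    convert this using 1
    abel
  · have := h₂ r hr.le
    rw [fil_of_le (by omega), hchoose hr.le, if_neg hdvd, if_neg hdvd, zero_smul,
      show r - (p + 1) = r - p - 1 by omega] at this
    simpa using this

end Conclusion

end TypeIII

/-- **series of type III, top coefficient.** Let `X^{(r)} ∈ F_{r-1} A`
(`r ≥ 1`) be commuting elements, `X^{(0)} = 1`, and `X_III^{(r)}` the `u^{-r}`-coefficient of
`∏_{i=1}^{p} Σ_s X^{(s)} (u-(i-1))^{-s}`. Then `X_III^{(0)} = 1`; `X_III^{(r)} = 0` for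
`1 ≤ r ≤ p-1`; `X_III^{(p)} = (X^{(1)})^p − X^{(1)} ∈ F_0 A`; if `r > p`, `p ∣ r`:
`X_III^{(r)} ∈ F_{r-p} A` and `X_III^{(r)} ≡ (X^{(r/p)})^p − X^{(r-p+1)} mod F_{r-p-1} A`;
if `r > p`, `p ∤ r`: `X_III^{(r)} ∈ F_{r-p-1} A`. -/
theorem typeIII_series
    (k : Type) [Field k] (p : ℕ) [Fact p.Prime] [CharP k p]
    (A : Type) [Ring A] [Algebra k A]
    (F : ℕ → Submodule k A) (hmono : Monotone F) (hone : (1 : A) ∈ F 0)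
    (hmul : ∀ r s : ℕ, ∀ x y : A, x ∈ F r → y ∈ F s → x * y ∈ F (r + s))
    (X : ℕ → A) (hX0 : X 0 = 1)
    (hXcomm : ∀ r s : ℕ, X r * X s = X s * X r)
    (hXF : ∀ r : ℕ, 1 ≤ r → X r ∈ F (r - 1)) :
    (PowerSeries.coeff (R := A) 0 (((List.range p).map fun m => shiftSer A m X).prod) = 1) ∧
    (∀ r : ℕ, 1 ≤ r → r < p →
      PowerSeries.coeff (R := A) r (((List.range p).map fun m => shiftSer A m X).prod) = 0) ∧
    (PowerSeries.coeff (R := A) p (((List.range p).map fun m => shiftSer A m X).prod)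
        = (X 1) ^ p - X 1 ∧ (X 1) ^ p - X 1 ∈ F 0) ∧
    (∀ r : ℕ, p < r → p ∣ r →
      PowerSeries.coeff (R := A) r (((List.range p).map fun m => shiftSer A m X).prod) ∈ F (r - p) ∧
      PowerSeries.coeff (R := A) r (((List.range p).map fun m => shiftSer A m X).prod)
        - ((X (r / p)) ^ p - X (r - p + 1)) ∈ F (r - p - 1)) ∧
    (∀ r : ℕ, p < r → ¬ p ∣ r →
      PowerSeries.coeff (R := A) r (((List.range p).map fun m => shiftSer A m X).prod)
        ∈ F (r - p - 1)) := by
  have : SetLike.GradedMonoid F := { one_mem := hone, mul_mem := fun r s x y => hmul r s x y }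
  obtain ⟨h₁, h₂⟩ :=
    TypeIII.coeff_prod_shiftSer_sub_mem_fil_of_commute p hmono hX0 hXcomm hXF
  exact TypeIII.typeIII_of_mem_fil p hX0 hXF _ h₁ h₂
end

section
/- Let k be a field of characteristic p > 0 (p prime) and let f ∈ k[x_1,…,x_p] be a symmetric polynomial that is homogeneous of degree l with 0 < l < p−1. Then f(0, 1, 2, …, p−1) = 0 (evaluation at x_i = i−1 for i = 1,…,p, the values taken in k). -/
/-!
Let `u` generate the cyclic group `(ℤ/p)ˣ`. Multiplication by `u` permutes the points
`0, 1, …, p - 1` of `ℤ/p`, so for symmetric `f` homogeneous of degree `l` the value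
`f(0, 1, …, p - 1)` is unchanged when multiplied by `u ^ l`. As `u` has order `p - 1 > l > 0`,
`u ^ l ≠ 1`, forcing the value to vanish.
-/

namespace MvPolynomial

variable {σ R : Type*}

theorem IsHomogeneous.eval_const_mul [CommSemiring R] {f : MvPolynomial σ R} {n : ℕ}
    (hf : f.IsHomogeneous n) (c : R) (v : σ → R) :
    eval (fun i => c * v i) f = c ^ n * eval v f := by
  rw [eval_eq, eval_eq, Finset.mul_sum]
  refine Finset.sum_congr rfl fun d hd => ?_
  have hdeg : ∑ i ∈ d.support, d i = n := by
    rw [← hf (mem_support_iff.mp hd), Finsupp.weight_apply, Finsupp.sum]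
    simp
  simp_rw [mul_pow, Finset.prod_mul_distrib, Finset.prod_pow_eq_pow_sum, hdeg]
  ring

theorem IsSymmetric.eval_comp [CommSemiring R] {f : MvPolynomial σ R} (hf : f.IsSymmetric)
    (τ : Equiv.Perm σ) (v : σ → R) : eval (v ∘ τ) f = eval v f := by
  rw [← eval_rename, hf τ]

theorem IsSymmetric.eval_eq_zero_of_comp_eq_const_mul [CommRing R] [IsDomain R]
    {f : MvPolynomial σ R} {n : ℕ} (hsym : f.IsSymmetric) (hhom : f.IsHomogeneous n)
    {v : σ → R} {τ : Equiv.Perm σ} {c : R} (hτ : v ∘ τ = fun i => c * v i)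
    (hc : c ^ n ≠ 1) :
    eval v f = 0 := by
  have hinv := hsym.eval_comp τ v
  rw [hτ, hhom.eval_const_mul] at hinv
  by_contra hne
  exact hc ((mul_eq_right₀ hne).mp hinv)

end MvPolynomial

theorem ZMod.finEquiv_apply (n : ℕ) [NeZero n] (i : Fin n) : finEquiv n i = (i : ℕ) := by
  obtain _ | n := n
  · exact absurd rfl (NeZero.ne 0)
  · exact (Fin.cast_val_eq_self i).symm

theorem ZMod.exists_perm_natCast_eq_mul (n : ℕ) [NeZero n] (u : (ZMod n)ˣ) :
    ∃ τ : Equiv.Perm (Fin n), ∀ i, ((τ i : ℕ) : ZMod n) = u * (i : ℕ) := by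
  let e : Fin n ≃ ZMod n := (finEquiv n).toEquiv
  refine ⟨e.symm.permCongr (Units.mulLeft u), fun i => ?_⟩
  have he : ∀ j, e j = (j : ℕ) := finEquiv_apply n
  rw [← he, ← he, Equiv.permCongr_apply]
  simp

theorem ZMod.exists_unit_orderOf_eq (p : ℕ) [Fact p.Prime] :
    ∃ u : (ZMod p)ˣ, orderOf u = p - 1 := by
  rw [← card_units p, ← Nat.card_eq_fintype_card]
  exact IsCyclic.exists_ofOrder_eq_natCard

/-- Over a field `k` of characteristic `p > 0`, a symmetric polynomial
`f ∈ k[x_1,…,x_p]` that is homogeneous of degree `l` with `0 < l < p−1` vanishes at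
`(x_1,…,x_p) = (0,1,…,p−1)`. -/
theorem symmetric_homogeneous_vanishes_at_zero_to_p_minus_one
    (k : Type) [Field k] (p : ℕ) [Fact p.Prime] [CharP k p]
    (f : MvPolynomial (Fin p) k) (hsym : f.IsSymmetric)
    (l : ℕ) (hhom : f.IsHomogeneous l) (hl0 : 0 < l) (hl1 : l < p - 1) :
    MvPolynomial.eval (fun i : Fin p => ((i : ℕ) : k)) f = 0 := by
  obtain ⟨u, hu⟩ := ZMod.exists_unit_orderOf_eq p
  obtain ⟨τ, hτ⟩ := ZMod.exists_perm_natCast_eq_mul p u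
  let φ : ZMod p →+* k := ZMod.castHom dvd_rfl k
  refine hsym.eval_eq_zero_of_comp_eq_const_mul hhom (τ := τ) (c := φ u) ?_ ?_
  · funext i
    simpa [φ, map_natCast] using congrArg φ (hτ i)
  · have hul : u ^ l ≠ 1 := pow_ne_one_of_lt_orderOf hl0.ne' (hu ▸ hl1)
    rwa [← map_pow, ← Units.val_pow_eq_pow_val, ← map_one φ, φ.injective.ne_iff, Ne,
      Units.val_eq_one]
end
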